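/- arXiv:2303.16372 — 3 statements merged into one kernel-verified Lean document; each statement's English description precedes it below -/
import Mathlib

section
/- Let P and Q be probability measures on a measurable space such that for every measurable set T, P(T) ≤ e^γ·Q(T) and Q(T) ≤ e^γ·P(T) for some γ ≥ 0. Then the KL divergence satisfies D_KL(P‖Q) ≤ γ·(e^γ − 1)/(e^γ + 1) = γ·tanh(γ/2). -/
open MeasureTheory Real Set
open scoped ENNReal

/-!
Pure differential privacy pins the density `r = dP/dQ` between `e^{-γ}` and `e^γ`, `Q`-a.e.
Since `φ(r) = r log r` is convex, it lies below its chord over `[e^{-γ}, e^γ]`; the chord is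
affine, so integrating it against `Q` only sees `∫ r dQ = 1`. Hence
`D_KL(P‖Q) = ∫ φ(r) dQ` is at most the chord evaluated at `1`, which is `γ tanh(γ/2)`.
-/

theorem ConvexOn.le_chord {f : ℝ → ℝ} {a b y : ℝ} (hf : ConvexOn ℝ (Icc a b) f)
    (hy : y ∈ Icc a b) : f y ≤ f a + slope f a b * (y - a) := by
  obtain ⟨hay, hyb⟩ := hy
  rcases hay.eq_or_lt with rfl | hay
  · simp
  rcases hyb.eq_or_lt with rfl | hyb
  · simp [slope_def_field, sub_ne_zero.2 hay.ne']
  have hab : 0 < b - a := by linarith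
  have hsecant := hf.secant_mono_aux1 (left_mem_Icc.2 (hay.trans hyb).le)
    (right_mem_Icc.2 (hay.trans hyb).le) hay hyb
  rw [slope_def_field, div_mul_eq_mul_div, ← sub_le_iff_le_add', le_div_iff₀ hab]
  linarith

theorem ConvexOn.integral_comp_le_chord {Ω : Type*} [MeasurableSpace Ω] {μ : Measure Ω}
    [IsProbabilityMeasure μ] {f : ℝ → ℝ} {a b : ℝ} (hf : ConvexOn ℝ (Icc a b) f)
    (hf_cont : Continuous f) {X : Ω → ℝ} (hX : AEStronglyMeasurable X μ)
    (hXab : ∀ᵐ ω ∂μ, X ω ∈ Icc a b) :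
    ∫ ω, f (X ω) ∂μ ≤ f a + slope f a b * ((∫ ω, X ω ∂μ) - a) := by
  have hX_int : Integrable X μ := .of_bound hX (max |a| |b|) <| by
    filter_upwards [hXab] with ω hω using abs_le_max_abs_abs hω.1 hω.2
  obtain ⟨C, hC⟩ :=
    isCompact_Icc.exists_bound_of_continuousOn (hf_cont.continuousOn (s := Icc a b))
  have hfX_int : Integrable (fun ω ↦ f (X ω)) μ :=
    .of_bound (hf_cont.comp_aestronglyMeasurable hX) C <| by
      filter_upwards [hXab] with ω hω using hC _ hω
  have hchord_int : Integrable (fun ω ↦ f a + slope f a b * (X ω - a)) μ := by fun_prop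
  calc ∫ ω, f (X ω) ∂μ ≤ ∫ ω, f a + slope f a b * (X ω - a) ∂μ :=
        integral_mono_ae hfX_int hchord_int <| by
          filter_upwards [hXab] with ω hω using hf.le_chord hω
    _ = f a + slope f a b * ((∫ ω, X ω ∂μ) - a) := by
        rw [integral_add (integrable_const _) (by fun_prop), integral_const_mul,
          integral_sub hX_int (integrable_const _)]
        simp

namespace MeasureTheory.Measure

variable {α : Type*} [MeasurableSpace α] {μ ν : Measure α}

theorem rnDeriv_le_of_le_smul [SigmaFinite ν] {c : ℝ≥0∞} (h : μ ≤ c • ν) :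
    μ.rnDeriv ν ≤ᵐ[ν] fun _ ↦ c :=
  ae_le_of_forall_setLIntegral_le_of_sigmaFinite (μ.measurable_rnDeriv ν) fun s _ _ ↦ by
    rw [setLIntegral_const]
    exact (setLIntegral_rnDeriv_le s).trans (h s)

theorem inv_le_rnDeriv_of_le_smul [SigmaFinite ν] [HaveLebesgueDecomposition μ ν]
    {c : ℝ≥0∞} (hμν : μ ≪ ν) (h : ν ≤ c • μ) : (fun _ ↦ c⁻¹) ≤ᵐ[ν] μ.rnDeriv ν :=
  ae_le_of_forall_setLIntegral_le_of_sigmaFinite measurable_const fun s hs _ ↦ by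
    rw [setLIntegral_const, setLIntegral_rnDeriv' hμν hs]
    calc c⁻¹ * ν s ≤ c⁻¹ * (c * μ s) := by gcongr; exact h s
      _ ≤ μ s := by
        rw [← mul_assoc]
        exact mul_le_of_le_one_left' (ENNReal.inv_mul_le_one c)

theorem toReal_rnDeriv_mem_Icc_of_le_smul [SigmaFinite ν] [HaveLebesgueDecomposition μ ν]
    {c : ℝ} (hc : 0 < c) (hμ : μ ≤ ENNReal.ofReal c • ν) (hν : ν ≤ ENNReal.ofReal c • μ) :
    ∀ᵐ x ∂ν, (μ.rnDeriv ν x).toReal ∈ Icc c⁻¹ c := by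
  filter_upwards [rnDeriv_le_of_le_smul hμ,
    inv_le_rnDeriv_of_le_smul (absolutelyContinuous_of_le_smul hμ) hν] with x hup hlow
  rw [← ENNReal.ofReal_inv_of_pos hc] at hlow
  have hfin : μ.rnDeriv ν x ≠ ⊤ := ne_top_of_le_ne_top ENNReal.ofReal_ne_top hup
  exact ⟨(ENNReal.ofReal_le_iff_le_toReal hfin).1 hlow,
    ENNReal.toReal_le_of_le_ofReal hc.le hup⟩

end MeasureTheory.Measure

theorem mul_log_chord_exp_at_one (γ : ℝ) :
    exp (-γ) * log (exp (-γ)) + slope (fun r ↦ r * log r) (exp (-γ)) (exp γ) * (1 - exp (-γ))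
      = γ * ((exp γ - 1) / (exp γ + 1)) := by
  rcases eq_or_ne γ 0 with rfl | hγ
  · simp
  have hne : exp γ ^ 2 - 1 ≠ 0 := by
    rw [sub_ne_zero, ← exp_nat_mul]
    simp [hγ]
  rw [slope_def_field, log_exp, log_exp, exp_neg]
  have := exp_pos γ
  field_simp
  ring

theorem tanh_half_eq (x : ℝ) : tanh (x / 2) = (exp x - 1) / (exp x + 1) := by
  have hsq : exp x = exp (x / 2) * exp (x / 2) := by rw [← exp_add, add_halves]
  rw [tanh_eq_sinh_div_cosh, sinh_eq, cosh_eq, exp_neg, hsq]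
  have := exp_pos (x / 2)
  field_simp

theorem klDiv_le_of_dp_general {α : Type*} [MeasurableSpace α]
    (P Q : Measure α) [IsProbabilityMeasure P] [IsProbabilityMeasure Q]
    (γ : ℝ)
    (hPQ : ∀ T : Set α, MeasurableSet T → P T ≤ ENNReal.ofReal (exp γ) * Q T)
    (hQP : ∀ T : Set α, MeasurableSet T → Q T ≤ ENNReal.ofReal (exp γ) * P T) :
    (∫ x, llr P Q x ∂P) ≤ γ * ((exp γ - 1) / (exp γ + 1)) ∧
      γ * ((exp γ - 1) / (exp γ + 1)) = γ * tanh (γ / 2) := by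
  have hP_le : P ≤ ENNReal.ofReal (exp γ) • Q := Measure.le_iff.2 hPQ
  have hQ_le : Q ≤ ENNReal.ofReal (exp γ) • P := Measure.le_iff.2 hQP
  have hac : P ≪ Q := Measure.absolutelyContinuous_of_le_smul hP_le
  have hbounds : ∀ᵐ x ∂Q, (P.rnDeriv Q x).toReal ∈ Icc (exp (-γ)) (exp γ) := by
    simpa only [exp_neg] using Measure.toReal_rnDeriv_mem_Icc_of_le_smul (exp_pos γ) hP_le hQ_le
  have hφ : ConvexOn ℝ (Icc (exp (-γ)) (exp γ)) fun r ↦ r * log r :=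
    convexOn_mul_log.subset (Icc_subset_Ici_self.trans (Ici_subset_Ici.2 (exp_pos _).le))
      (convex_Icc _ _)
  refine ⟨?_, by rw [tanh_half_eq]⟩
  calc ∫ x, llr P Q x ∂P = ∫ x, (P.rnDeriv Q x).toReal * log (P.rnDeriv Q x).toReal ∂Q :=
        (integral_rnDeriv_mul_log hac).symm
    _ ≤ exp (-γ) * log (exp (-γ)) + slope (fun r ↦ r * log r) (exp (-γ)) (exp γ)
          * ((∫ x, (P.rnDeriv Q x).toReal ∂Q) - exp (-γ)) :=
        hφ.integral_comp_le_chord continuous_mul_log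
          (Measure.measurable_rnDeriv P Q).ennreal_toReal.aestronglyMeasurable hbounds
    _ = γ * ((exp γ - 1) / (exp γ + 1)) := by
        rw [Measure.integral_toReal_rnDeriv hac, probReal_univ, mul_log_chord_exp_at_one]

/-- If P and Q are γ-indistinguishable (pure DP), then
`D_KL(P‖Q) ≤ γ·(e^γ − 1)/(e^γ + 1) = γ·tanh(γ/2)`. -/
theorem klDiv_le_of_dp {α : Type*} [MeasurableSpace α]
    (P Q : Measure α) [IsProbabilityMeasure P] [IsProbabilityMeasure Q]
    (γ : ℝ) (hγ : 0 ≤ γ)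
    (hPQ : ∀ T : Set α, MeasurableSet T → P T ≤ ENNReal.ofReal (exp γ) * Q T)
    (hQP : ∀ T : Set α, MeasurableSet T → Q T ≤ ENNReal.ofReal (exp γ) * P T) :
    (∫ x, llr P Q x ∂P) ≤ γ * ((exp γ - 1) / (exp γ + 1)) ∧
      γ * ((exp γ - 1) / (exp γ + 1)) = γ * tanh (γ / 2) :=
  klDiv_le_of_dp_general P Q γ hPQ hQP
end

section
/- Let P and Q be probability measures such that e^{−γ} ≤ dP/dQ ≤ e^{γ} pointwise for some 0 ≤ γ ≤ 1, and let 1 < α ≤ 1 + 1/γ. Then D_α(P‖Q) ≤ (α/2)·(e^γ − 1)²·e^{max{0, 1−γ}} ≤ (3/2)·α·γ². -/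
/-!
Write `f = dP/dQ`. Taylor's theorem with Lagrange remainder at `1` gives
`f ^ α ≤ 1 + α (f - 1) + α (α - 1) / 2 · (f - 1) ^ 2 · max (f ^ (α - 2)) 1`, and on
`[e^{-γ}, e^γ]` the factor `(f - 1) ^ 2 · max (f ^ (α - 2)) 1` is at most
`C = (e^γ - 1) ^ 2 · e^{max 0 (1 - γ)}`; this is where `(α - 1) γ ≤ 1` enters. Since
`∫ f dQ ≤ 1`, integrating gives `∫ f ^ α dQ ≤ 1 + α (α - 1) C / 2`, and `log x ≤ x - 1` yields the
first inequality. The second one is `C = 2 e (cosh γ - 1)` bounded by the Taylor series of `cosh`.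
-/

open MeasureTheory Real Set

theorem Real.exists_rpow_eq_taylor_lagrange {α u : ℝ} (hu : 0 < u) (hu1 : u ≠ 1) :
    ∃ ξ ∈ uIoo 1 u,
      u ^ α = 1 + α * (u - 1) + α * (α - 1) / 2 * ξ ^ (α - 2) * (u - 1) ^ 2 := by
  have hne : ∀ x ∈ uIcc 1 u, x ≠ 0 := fun x hx => (lt_of_lt_of_le (lt_min one_pos hu) hx.1).ne'
  have hsmooth : ContDiffOn ℝ 2 (fun x : ℝ => x ^ α) (uIcc 1 u) :=
    fun x hx => (contDiffAt_rpow_const_of_ne (hne x hx)).contDiffWithinAt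
  obtain ⟨ξ, hξ, h⟩ := taylor_mean_remainder_lagrange_iteratedDeriv (n := 1) hu1.symm hsmooth
  have hderiv1 : derivWithin (fun x : ℝ => x ^ α) (uIcc 1 u) 1 = α := by
    rw [(hasDerivAt_rpow_const (Or.inl one_ne_zero)).hasDerivWithinAt.derivWithin
      (uniqueDiffOn_uIcc hu1.symm 1 left_mem_uIcc), one_rpow, mul_one]
  have hderiv2 : iteratedDeriv 2 (fun x : ℝ => x ^ α) ξ = α * (α - 1) * ξ ^ (α - 2) := by
    rw [iteratedDeriv_succ, iteratedDeriv_one, deriv_rpow_const',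
      ((hasDerivAt_rpow_const (Or.inl (hne ξ (uIoo_subset_uIcc_self hξ)))).const_mul α).deriv]
    ring_nf
  refine ⟨ξ, hξ, ?_⟩
  simp only [taylorWithinEval_succ, taylor_within_zero_eval, hderiv2, one_rpow] at h
  norm_num at h
  linear_combination h + (u - 1) * hderiv1

theorem Real.rpow_le_max_of_mem_uIcc {p u ξ : ℝ} (hu : 0 < u) (hξ : ξ ∈ uIcc 1 u) :
    ξ ^ p ≤ max (u ^ p) 1 := by
  rcases le_total 1 u with h1 | h1
  · rw [uIcc_of_le h1] at hξ
    rcases le_total 0 p with hp | hp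
    · exact (rpow_le_rpow (by linarith [hξ.1]) hξ.2 hp).trans (le_max_left _ _)
    · exact (rpow_le_one_of_one_le_of_nonpos hξ.1 hp).trans (le_max_right _ _)
  · rw [uIcc_of_ge h1] at hξ
    have hξ0 : 0 < ξ := hu.trans_le hξ.1
    rcases le_total 0 p with hp | hp
    · exact (rpow_le_one hξ0.le hξ.2 hp).trans (le_max_right _ _)
    · exact (rpow_le_rpow_of_nonpos hu hξ.1 hp).trans (le_max_left _ _)

theorem Real.rpow_le_one_add_mul_sub_one_add_sq_mul_max {α u : ℝ} (hα : 1 ≤ α) (hu : 0 < u) :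
    u ^ α ≤ 1 + α * (u - 1) + α * (α - 1) / 2 * ((u - 1) ^ 2 * max (u ^ (α - 2)) 1) := by
  rcases eq_or_ne u 1 with rfl | hu1
  · simp
  obtain ⟨ξ, hξ, h⟩ := exists_rpow_eq_taylor_lagrange (α := α) hu hu1
  have hc : 0 ≤ α * (α - 1) / 2 := by nlinarith
  have hξu := rpow_le_max_of_mem_uIcc (p := α - 2) hu (uIoo_subset_uIcc_self hξ)
  rw [h]
  nlinarith [mul_le_mul_of_nonneg_left hξu (mul_nonneg hc (sq_nonneg (u - 1)))]

theorem Real.sq_sub_one_le_sq_exp_sub_one {γ u : ℝ} (hl : exp (-γ) ≤ u) (hr : u ≤ exp γ) :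
    (u - 1) ^ 2 ≤ (exp γ - 1) ^ 2 := by
  have h2 : 2 ≤ exp γ + exp (-γ) := by linarith [add_one_le_exp γ, add_one_le_exp (-γ)]
  exact sq_le_sq' (by linarith) (by linarith)

theorem Real.sq_sub_one_mul_max_rpow_le {γ α u : ℝ} (hα : 0 ≤ α) (hαγ : (α - 1) * γ ≤ 1)
    (hl : exp (-γ) ≤ u) (hr : u ≤ exp γ) :
    (u - 1) ^ 2 * max (u ^ (α - 2)) 1 ≤ (exp γ - 1) ^ 2 * exp (max 0 (1 - γ)) := by
  have hu : 0 < u := (exp_pos _).trans_le hl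
  have hsq := sq_sub_one_le_sq_exp_sub_one hl hr
  have hexp : 1 ≤ exp (max 0 (1 - γ)) := one_le_exp (le_max_left _ _)
  rcases le_total u 1 with h1 | h1
  · -- below `1`, `u ^ (α - 2)` is large, but `(u - 1) ^ 2 * u ^ (α - 2) = (u⁻¹ - 1) ^ 2 * u ^ α`
    have hinv : u⁻¹ ≤ exp γ := by simpa [exp_neg] using inv_anti₀ (exp_pos _) hl
    have hrem : (u - 1) ^ 2 * u ^ (α - 2) ≤ (exp γ - 1) ^ 2 :=
      calc (u - 1) ^ 2 * u ^ (α - 2) = (u⁻¹ - 1) ^ 2 * u ^ α := by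
            rw [rpow_sub hu, rpow_two]; field_simp; ring
        _ ≤ (exp γ - 1) ^ 2 * 1 := by
            gcongr
            · exact sub_nonneg.2 ((one_le_inv₀ hu).2 h1)
            · exact rpow_le_one hu.le h1 hα
        _ = (exp γ - 1) ^ 2 := mul_one _
    rw [mul_max_of_nonneg _ _ (sq_nonneg _), mul_one]
    exact (max_le hrem hsq).trans (le_mul_of_one_le_right (sq_nonneg _) hexp)
  · have hmax : max (u ^ (α - 2)) 1 ≤ exp (max 0 (1 - γ)) := by
      refine max_le ?_ hexp
      rcases le_total α 2 with h2 | h2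
      · exact (rpow_le_one_of_one_le_of_nonpos h1 (by linarith)).trans hexp
      · calc u ^ (α - 2) ≤ exp γ ^ (α - 2) := rpow_le_rpow hu.le hr (by linarith)
          _ = exp (γ * (α - 2)) := (exp_mul γ (α - 2)).symm
          _ ≤ exp (max 0 (1 - γ)) :=
            exp_le_exp.2 ((by linarith : γ * (α - 2) ≤ 1 - γ).trans (le_max_right _ _))
    exact mul_le_mul hsq hmax (by positivity) (sq_nonneg _)

theorem Real.cosh_le_of_abs_le_one {x : ℝ} (hx : |x| ≤ 1) :
    cosh x ≤ 1 + x ^ 2 / 2 + x ^ 4 / 24 + 7 * x ^ 6 / 4320 := by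
  have hpos := (abs_sub_le_iff.1 (exp_bound hx (n := 6) (by norm_num))).1
  have hneg := (abs_sub_le_iff.1 (exp_bound (x := -x) (by rwa [abs_neg]) (n := 6)
    (by norm_num))).1
  simp only [Finset.sum_range_succ, Finset.sum_range_zero, Nat.factorial, abs_neg,
    (by decide : Even 6).pow_abs] at hpos hneg
  rw [cosh_eq]
  ring_nf at hpos hneg ⊢
  linarith

theorem Real.sq_exp_sub_one_mul_exp_one_sub_le {γ : ℝ} (hγ0 : 0 ≤ γ) (hγ1 : γ ≤ 1) :
    (exp γ - 1) ^ 2 * exp (1 - γ) ≤ 3 * γ ^ 2 := by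
  have hprod : exp γ * exp (-γ) = 1 := by rw [← exp_add, add_neg_cancel, exp_zero]
  have hcosh : (exp γ - 1) ^ 2 * exp (1 - γ) = 2 * exp 1 * (cosh γ - 1) := by
    rw [cosh_eq, sub_eq_add_neg 1, exp_add]
    linear_combination (exp 1 * (exp γ - 2)) * hprod
  have hbound : cosh γ - 1 ≤ γ ^ 2 / 2 + γ ^ 4 / 24 + 7 * γ ^ 6 / 4320 := by
    linarith [cosh_le_of_abs_le_one (abs_le.2 ⟨by linarith, hγ1⟩)]
  have hγ2 : γ ^ 2 ≤ 1 := by nlinarith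
  rw [hcosh]
  nlinarith [mul_le_mul exp_one_lt_d9.le hbound (sub_nonneg.2 (one_le_cosh γ)) (by norm_num),
    pow_le_pow_left₀ (sq_nonneg γ) hγ2 2, pow_le_pow_left₀ (sq_nonneg γ) hγ2 3]

theorem MeasureTheory.Measure.integral_toReal_rnDeriv_le {Ω : Type*} [MeasurableSpace Ω]
    (P Q : Measure Ω) [IsFiniteMeasure P] [SigmaFinite Q] :
    ∫ x, (P.rnDeriv Q x).toReal ∂Q ≤ P.real univ := by
  rw [Measure.integral_toReal_rnDeriv']
  exact sub_le_self _ measureReal_nonneg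

theorem MeasureTheory.integral_le_one_add_of_le_one_add_mul_sub_one {Ω : Type*}
    [MeasurableSpace Ω] {Q : Measure Ω} [IsProbabilityMeasure Q] {f g : Ω → ℝ} {a K : ℝ}
    (hf : Integrable f Q) (hg : Integrable g Q) (hf1 : ∫ x, f x ∂Q ≤ 1) (ha : 0 ≤ a)
    (h : ∀ x, g x ≤ 1 + a * (f x - 1) + K) :
    ∫ x, g x ∂Q ≤ 1 + K :=
  calc ∫ x, g x ∂Q ≤ ∫ x, (1 - a + K) + a * f x ∂Q :=
        integral_mono hg ((integrable_const _).add (hf.const_mul a)) fun x => by linarith [h x]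
    _ = 1 - a + K + a * ∫ x, f x ∂Q := by
        rw [integral_add (integrable_const _) (hf.const_mul a), integral_const, integral_const_mul,
          probReal_univ, one_smul]
    _ ≤ 1 + K := by nlinarith

theorem MeasureTheory.Measure.mul_log_integral_rpow_rnDeriv_le {Ω : Type*} [MeasurableSpace Ω]
    {P Q : Measure Ω} [IsProbabilityMeasure P] [IsProbabilityMeasure Q] {α B K : ℝ} (hα : 1 < α)
    (hpos : ∀ x, 0 < (P.rnDeriv Q x).toReal) (hB : ∀ x, (P.rnDeriv Q x).toReal ≤ B)
    (h : ∀ x, (P.rnDeriv Q x).toReal ^ α ≤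
      1 + α * ((P.rnDeriv Q x).toReal - 1) + α * (α - 1) / 2 * K) :
    (α - 1)⁻¹ * log (∫ x, (P.rnDeriv Q x).toReal ^ α ∂Q) ≤ α / 2 * K := by
  set f : Ω → ℝ := fun x => (P.rnDeriv Q x).toReal
  have hα0 : 0 ≤ α := by linarith
  have hint : Integrable (fun x => f x ^ α) Q := by
    have hmeas : Measurable f := (Measure.measurable_rnDeriv P Q).ennreal_toReal
    refine .of_bound (hmeas.pow_const α).aestronglyMeasurable (B ^ α) (ae_of_all _ fun x => ?_)
    rw [norm_of_nonneg (rpow_nonneg (hpos x).le α)]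
    exact rpow_le_rpow (hpos x).le (hB x) hα0
  have hI : ∫ x, f x ^ α ∂Q ≤ 1 + α * (α - 1) / 2 * K :=
    integral_le_one_add_of_le_one_add_mul_sub_one Measure.integrable_toReal_rnDeriv hint
      ((P.integral_toReal_rnDeriv_le Q).trans_eq probReal_univ) hα0 h
  have hIpos : 0 < ∫ x, f x ^ α ∂Q := by
    refine (integral_pos_iff_support_of_nonneg (fun x => rpow_nonneg (hpos x).le α) hint).2 ?_
    rw [Function.support_eq_univ fun x => (rpow_pos_of_pos (hpos x) α).ne', measure_univ]
    exact one_pos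
  have hsub : 0 < α - 1 := sub_pos.2 hα
  calc (α - 1)⁻¹ * log (∫ x, f x ^ α ∂Q) ≤ (α - 1)⁻¹ * (α * (α - 1) / 2 * K) := by
        gcongr
        linarith [log_le_sub_one_of_pos hIpos]
    _ = α / 2 * K := by field_simp

/-- If e^{−γ} ≤ dP/dQ ≤ e^{γ} with 0 ≤ γ ≤ 1 and 1 < α ≤ 1 + 1/γ, then
`D_α(P‖Q) ≤ (α/2)(e^γ−1)² e^{max{0,1−γ}} ≤ (3/2)αγ²`. -/
theorem renyiDiv_quadratic_bound {Ω : Type*} [MeasurableSpace Ω]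
    (P Q : Measure Ω) [IsProbabilityMeasure P] [IsProbabilityMeasure Q]
    (γ α : ℝ) (hγ0 : 0 ≤ γ) (hγ1 : γ ≤ 1) (hα : 1 < α) (hαγ : (α - 1) * γ ≤ 1)
    (hlb : ∀ x, exp (-γ) ≤ (P.rnDeriv Q x).toReal)
    (hub : ∀ x, (P.rnDeriv Q x).toReal ≤ exp γ) :
    (α - 1)⁻¹ * log (∫ x, ((P.rnDeriv Q x).toReal) ^ α ∂Q) ≤
        α / 2 * (exp γ - 1) ^ 2 * exp (max 0 (1 - γ)) ∧
      α / 2 * (exp γ - 1) ^ 2 * exp (max 0 (1 - γ)) ≤ 3 / 2 * α * γ ^ 2 := by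
  have hpos x : 0 < (P.rnDeriv Q x).toReal := (exp_pos _).trans_le (hlb x)
  constructor
  · rw [mul_assoc (α / 2)]
    refine Measure.mul_log_integral_rpow_rnDeriv_le hα hpos hub fun x => ?_
    calc (P.rnDeriv Q x).toReal ^ α
        ≤ 1 + α * ((P.rnDeriv Q x).toReal - 1) + α * (α - 1) / 2 *
          (((P.rnDeriv Q x).toReal - 1) ^ 2 * max ((P.rnDeriv Q x).toReal ^ (α - 2)) 1) :=
          rpow_le_one_add_mul_sub_one_add_sq_mul_max hα.le (hpos x)
      _ ≤ _ := by
          gcongr _ + _ * ?_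
          exact sq_sub_one_mul_max_rpow_le (by linarith) hαγ (hlb x) (hub x)
  · rw [max_eq_right (by linarith : (0 : ℝ) ≤ 1 - γ)]
    calc α / 2 * (exp γ - 1) ^ 2 * exp (1 - γ) = α / 2 * ((exp γ - 1) ^ 2 * exp (1 - γ)) := by
          ring
      _ ≤ α / 2 * (3 * γ ^ 2) :=
          mul_le_mul_of_nonneg_left (sq_exp_sub_one_mul_exp_one_sub_le hγ0 hγ1) (by linarith)
      _ = 3 / 2 * α * γ ^ 2 := by ring
end

section
/- Let P and Q be probability measures such that e^{−γ} ≤ dP/dQ ≤ e^{γ} pointwise for some γ ≥ 0, and let α > 1. Then D_α(P‖Q) ≤ min{γ, (3/2)·α·γ²}. -/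
/-!
On `[e^{-γ}, e^γ]` the convex function `x ↦ x ^ α` lies below its secant, so integrating against
`Q` and using `∫ dP/dQ dQ ≤ 1` bounds `∫ (dP/dQ) ^ α dQ` by the value `V` of the secant at `1`,
i.e. by the moment of the two-point density with values `e^{±γ}` and mean one. Explicitly
`V = (e^{αγ} + e^{-(α-1)γ}) / (e^γ + 1)`, which is at most `e^{(α-1)γ}`, and
`V - 1 = (1 - e^{-(α-1)γ}) (e^{αγ} - 1) / (e^γ + 1) ≤ (α-1)γ · 3αγ / 2` once `αγ ≤ 2/3`.
Taking logarithms gives the two bounds.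
-/

open MeasureTheory Real Set

theorem ConvexOn.le_secant {𝕜 : Type*} [Field 𝕜] [LinearOrder 𝕜] [IsStrictOrderedRing 𝕜]
    {φ : 𝕜 → 𝕜} {a b x : 𝕜} (hφ : ConvexOn 𝕜 (Icc a b) φ) (hx : x ∈ Icc a b) :
    φ x ≤ φ a + (φ b - φ a) / (b - a) * (x - a) := by
  rcases hx.1.eq_or_lt with rfl | hax
  · simp
  have hab := hx.1.trans hx.2
  have hslope := hφ.secant_mono (left_mem_Icc.2 hab) hx (right_mem_Icc.2 hab) hax.ne'
    (hax.trans_le hx.2).ne' hx.2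
  rw [div_le_iff₀ (sub_pos.2 hax)] at hslope
  linarith

/-- The Edmundson–Madansky inequality, with the mean of `f` replaced by an upper bound `m`,
which is harmless as long as the secant is increasing. -/
theorem ConvexOn.integral_comp_le_secant {Ω : Type*} [MeasurableSpace Ω] {μ : Measure Ω}
    [IsProbabilityMeasure μ] {φ : ℝ → ℝ} {f : Ω → ℝ} {a b m : ℝ}
    (hφ : ConvexOn ℝ (Icc a b) φ) (hφab : φ a ≤ φ b) (hf : ∀ᵐ x ∂μ, f x ∈ Icc a b)
    (hfi : Integrable f μ) (hφf : Integrable (fun x ↦ φ (f x)) μ) (hm : ∫ x, f x ∂μ ≤ m) :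
    ∫ x, φ (f x) ∂μ ≤ φ a + (φ b - φ a) / (b - a) * (m - a) := by
  obtain ⟨x₀, hx₀⟩ := hf.exists
  set s := (φ b - φ a) / (b - a)
  have hs : 0 ≤ s := div_nonneg (sub_nonneg.2 hφab) (sub_nonneg.2 (hx₀.1.trans hx₀.2))
  calc ∫ x, φ (f x) ∂μ ≤ ∫ x, φ a + s * (f x - a) ∂μ :=
        integral_mono_ae hφf ((integrable_const _).add ((hfi.sub (integrable_const _)).const_mul s))
          (hf.mono fun x hx ↦ hφ.le_secant hx)
    _ = φ a + s * (∫ x, f x ∂μ - a) := by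
        have hg : Integrable (fun x ↦ s * (f x - a)) μ := (hfi.sub (integrable_const a)).const_mul s
        rw [integral_add (integrable_const _) hg, integral_const_mul,
          integral_sub hfi (integrable_const _)]
        simp
    _ ≤ φ a + s * (m - a) := by gcongr

noncomputable def twoPointMoment (γ α : ℝ) : ℝ :=
  (exp (α * γ) + exp (-((α - 1) * γ))) / (exp γ + 1)

theorem exp_neg_rpow_add_slope_mul_eq_twoPointMoment (γ α : ℝ) :
    exp (-γ) ^ α + (exp γ ^ α - exp (-γ) ^ α) / (exp γ - exp (-γ)) * (1 - exp (-γ)) =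
      twoPointMoment γ α := by
  rcases eq_or_ne γ 0 with rfl | hγ
  · norm_num [twoPointMoment]
  have hsplit : α * γ = γ + (α - 1) * γ := by ring
  have hx : exp γ ≠ 1 := by rwa [Ne, exp_eq_one_iff]
  rw [twoPointMoment, ← exp_mul, ← exp_mul, neg_mul, mul_comm γ α, exp_neg (α * γ), exp_neg γ,
    exp_neg, hsplit, exp_add]
  have hx₁ : exp γ - 1 ≠ 0 := sub_ne_zero.2 hx
  have hden : exp γ - (exp γ)⁻¹ = (exp γ - 1) * (exp γ + 1) / exp γ := by field_simp; ring
  rw [hden]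
  field_simp
  ring

theorem twoPointMoment_le_exp {γ α : ℝ} (h : 0 ≤ (α - 1) * γ) :
    twoPointMoment γ α ≤ exp ((α - 1) * γ) := by
  rw [twoPointMoment, div_le_iff₀ (by positivity), show α * γ = γ + (α - 1) * γ by ring, exp_add,
    exp_neg]
  have hy : 1 ≤ exp ((α - 1) * γ) := one_le_exp h
  have hy_inv : (exp ((α - 1) * γ))⁻¹ ≤ 1 := inv_le_one_of_one_le₀ hy
  nlinarith [exp_pos γ]

theorem twoPointMoment_le_one_add {γ α : ℝ} (hγ : 0 ≤ γ) (hα : 1 ≤ α) (hαγ : α * γ ≤ 2 / 3) :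
    twoPointMoment γ α ≤ 1 + (α - 1) * (3 / 2 * α * γ ^ 2) := by
  set t := (α - 1) * γ with ht_def
  have ht : 0 ≤ t := mul_nonneg (sub_nonneg.2 hα) hγ
  have hv : 0 ≤ α * γ := by positivity
  have hsub : twoPointMoment γ α =
      1 + (1 - exp (-t)) * (exp (α * γ) - 1) / (exp γ + 1) := by
    rw [twoPointMoment, show α * γ = γ + t by ring, exp_add, exp_neg]
    field_simp
    ring
  have hdecay : 1 - exp (-t) ≤ t := by linarith [add_one_le_exp (-t)]
  have hgrowth : exp (α * γ) - 1 ≤ 3 * (α * γ) := by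
    have h := exp_bound_div_one_sub_of_interval hv (by linarith)
    rw [le_div_iff₀ (by linarith)] at h
    nlinarith [exp_pos (α * γ)]
  have htwo : 2 ≤ exp γ + 1 := by linarith [one_le_exp hγ]
  calc twoPointMoment γ α = 1 + (1 - exp (-t)) * (exp (α * γ) - 1) / (exp γ + 1) := hsub
    _ ≤ 1 + t * (3 * (α * γ)) / 2 := by
        gcongr
        linarith [one_le_exp hv]
    _ = 1 + (α - 1) * (3 / 2 * α * γ ^ 2) := by rw [ht_def]; ring

theorem integrable_rpow_of_mem_Icc {Ω : Type*} [MeasurableSpace Ω] {μ : Measure Ω}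
    [IsFiniteMeasure μ] {f : Ω → ℝ} {a b α : ℝ} (ha : 0 ≤ a) (hα : 0 ≤ α)
    (hfm : AEMeasurable f μ) (hf : ∀ᵐ x ∂μ, f x ∈ Icc a b) :
    Integrable (fun x ↦ f x ^ α) μ :=
  .of_bound (hfm.pow_const α).aestronglyMeasurable (b ^ α) <| hf.mono fun x hx ↦ by
    rw [norm_of_nonneg (rpow_nonneg (ha.trans hx.1) α)]
    exact rpow_le_rpow (ha.trans hx.1) hx.2 hα

theorem integral_rpow_le_twoPointMoment {Ω : Type*} [MeasurableSpace Ω] {μ : Measure Ω}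
    [IsProbabilityMeasure μ] {f : Ω → ℝ} {γ α : ℝ} (hα : 1 ≤ α)
    (hf : ∀ᵐ x ∂μ, f x ∈ Icc (exp (-γ)) (exp γ)) (hfi : Integrable f μ)
    (hmean : ∫ x, f x ∂μ ≤ 1) :
    ∫ x, f x ^ α ∂μ ≤ twoPointMoment γ α := by
  have hconv : ConvexOn ℝ (Icc (exp (-γ)) (exp γ)) (· ^ α) :=
    (convexOn_rpow hα).subset (fun x hx ↦ (exp_pos _).le.trans hx.1) (convex_Icc _ _)
  obtain ⟨x₀, hx₀⟩ := hf.exists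
  have hmono : exp (-γ) ^ α ≤ exp γ ^ α :=
    rpow_le_rpow (exp_pos _).le (hx₀.1.trans hx₀.2) (zero_le_one.trans hα)
  rw [← exp_neg_rpow_add_slope_mul_eq_twoPointMoment]
  exact hconv.integral_comp_le_secant hmono hf hfi
    (integrable_rpow_of_mem_Icc (exp_pos _).le (zero_le_one.trans hα) hfi.aemeasurable hf) hmean

/-- If e^{−γ} ≤ dP/dQ ≤ e^{γ} pointwise with γ ≥ 0 and α > 1, then
`D_α(P‖Q) ≤ min{γ, (3/2)αγ²}`. -/
theorem renyiDiv_le_min {Ω : Type*} [MeasurableSpace Ω]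
    (P Q : Measure Ω) [IsProbabilityMeasure P] [IsProbabilityMeasure Q]
    (γ α : ℝ) (hγ : 0 ≤ γ) (hα : 1 < α)
    (hlb : ∀ x, exp (-γ) ≤ (P.rnDeriv Q x).toReal)
    (hub : ∀ x, (P.rnDeriv Q x).toReal ≤ exp γ) :
    (α - 1)⁻¹ * log (∫ x, ((P.rnDeriv Q x).toReal) ^ α ∂Q) ≤
      min γ (3 / 2 * α * γ ^ 2) := by
  have hf : ∀ᵐ x ∂Q, (P.rnDeriv Q x).toReal ∈ Icc (exp (-γ)) (exp γ) :=
    ae_of_all _ fun x ↦ ⟨hlb x, hub x⟩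
  have hmean : ∫ x, (P.rnDeriv Q x).toReal ∂Q ≤ 1 := by
    simpa using Measure.setIntegral_toReal_rnDeriv_le (μ := P) (ν := Q) (s := univ)
      (measure_ne_top P _)
  have hI := integral_rpow_le_twoPointMoment hα.le hf Measure.integrable_toReal_rnDeriv hmean
  have hpos : 0 < ∫ x, (P.rnDeriv Q x).toReal ^ α ∂Q := by
    rw [integral_pos_iff_support_of_nonneg (fun x ↦ rpow_nonneg ENNReal.toReal_nonneg α)
      (integrable_rpow_of_mem_Icc (exp_pos _).le (by linarith)
        Measure.integrable_toReal_rnDeriv.aemeasurable hf)]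
    simp [Function.support, (rpow_pos_of_pos ((exp_pos _).trans_le (hlb _)) α).ne']
  have hbound : ∀ B, twoPointMoment γ α ≤ exp ((α - 1) * B) →
      (α - 1)⁻¹ * log (∫ x, (P.rnDeriv Q x).toReal ^ α ∂Q) ≤ B := fun B hB ↦ by
    rw [inv_mul_le_iff₀ (sub_pos.2 hα), log_le_iff_le_exp hpos]
    exact hI.trans hB
  have hlin := hbound γ (twoPointMoment_le_exp (mul_nonneg (sub_nonneg.2 hα.le) hγ))
  refine le_min hlin ?_
  by_cases hαγ : α * γ ≤ 2 / 3
  · refine hbound _ ((twoPointMoment_le_one_add hγ hα.le hαγ).trans ?_)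
    linarith [add_one_le_exp ((α - 1) * (3 / 2 * α * γ ^ 2))]
  · -- for `α γ > 2/3` the quadratic bound is weaker than the linear one
    exact hlin.trans (by nlinarith)
end
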